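/- arXiv:1505.06516 — 4 statements merged into one kernel-verified Lean document; each statement's English description precedes it below -/
import Mathlib

section
/- For every positive integer q and real x > 0, the Kubert identity holds: q^s · ζ(s, x) = ∑_{r=0}^{q−1} ζ(s, (r+x)/q), for all s ≠ 1 in the domain of analytic continuation. -/
/-!
For `Re s > 1` the identity is a rearrangement of the Hurwitz series: splitting `n = m q + r`
by residue class mod `q` and using `qˢ / (m q + r + x)ˢ = 1 / (m + (r + x) / q)ˢ`, the series
for `qˢ ζ(s, x)` breaks up into the series for the `ζ(s, (r + x) / q)`. Both sides are holomorphic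
on the connected set `ℂ \ {1}`, so the identity theorem propagates the equality from the
half-plane `Re s > 1` to all `s ≠ 1`.
-/

open Complex Finset

theorem HasSum.eq_sum_range_of_hasSum_mul_add {α : Type*} [AddCommMonoid α] [TopologicalSpace α]
    [ContinuousAdd α] [RegularSpace α] [T2Space α] {f : ℕ → α} {a : α} (hf : HasSum f a)
    {q : ℕ} [NeZero q] {b : ℕ → α} (hb : ∀ r < q, HasSum (fun m => f (m * q + r)) (b r)) :
    a = ∑ r ∈ range q, b r := by
  have hprod : HasSum (fun p : Fin q × ℕ => f (p.2 * q + p.1)) a :=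
    (Equiv.prodComm _ _).hasSum_iff.mpr ((Nat.divModEquiv q).symm.hasSum_iff.mpr hf)
  rw [← Fin.sum_univ_eq_sum_range]
  exact (hprod.prod_fiberwise fun r => hb r r.isLt).unique (hasSum_fintype _)

theorem Complex.one_div_ofReal_div_cpow {a b : ℝ} (ha : 0 ≤ a) (hb : 0 ≤ b) (s : ℂ) :
    1 / ((a : ℂ) / b) ^ s = (b : ℂ) ^ s * (1 / (a : ℂ) ^ s) := by
  rw [div_cpow_ofReal_nonneg ha hb, one_div_div, mul_one_div]

theorem Complex.eqOn_compl_one_of_eqOn_one_lt_re {E : Type*} [NormedAddCommGroup E]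
    [NormedSpace ℂ E] [CompleteSpace E] {f g : ℂ → E} (hf : DifferentiableOn ℂ f {1}ᶜ)
    (hg : DifferentiableOn ℂ g {1}ᶜ) (hfg : Set.EqOn f g {s | 1 < s.re}) :
    Set.EqOn f g {1}ᶜ := by
  have hconn : IsPreconnected ({1}ᶜ : Set ℂ) :=
    (isConnected_compl_singleton_of_one_lt_rank (by simp) _).isPreconnected
  have hnhds : {s : ℂ | 1 < s.re} ∈ nhds (2 : ℂ) :=
    (isOpen_lt continuous_const continuous_re).mem_nhds (by simp)
  exact (hf.analyticOnNhd isOpen_compl_singleton).eqOn_of_preconnected_of_eventuallyEq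
    (hg.analyticOnNhd isOpen_compl_singleton) hconn (by norm_num) (Filter.mem_of_superset hnhds hfg)

theorem kubert_identity_of_one_lt_re (Z : ℝ → ℂ → ℂ)
    (hser : ∀ (x : ℝ), 0 < x → ∀ s : ℂ, 1 < s.re →
      HasSum (fun n : ℕ => 1 / ((n : ℂ) + (x : ℂ)) ^ s) (Z x s))
    {q : ℕ} (hq : 0 < q) {x : ℝ} (hx : 0 < x) {s : ℂ} (hs : 1 < s.re) :
    (q : ℂ) ^ s * Z x s = ∑ r ∈ range q, Z ((r + x) / q) s := by
  have : NeZero q := ⟨hq.ne'⟩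
  refine ((hser x hx s hs).mul_left _).eq_sum_range_of_hasSum_mul_add fun r _ => ?_
  refine (hser ((r + x) / q) (by positivity) s hs).congr_fun fun m => ?_
  have hsplit : (m : ℂ) + (((r + x) / q : ℝ) : ℂ) = (((m * q + r : ℕ) + x : ℝ) : ℂ) / (q : ℝ) := by
    have : (q : ℂ) ≠ 0 := by exact_mod_cast hq.ne'
    push_cast
    field_simp
    ring
  rw [hsplit, one_div_ofReal_div_cpow (by positivity) q.cast_nonneg]
  push_cast
  rfl

/-- The Kubert identity `qˢ ζ(s,x) = ∑_{r=0}^{q-1} ζ(s, (r+x)/q)` for the Hurwitz zeta function,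
formulated for any function `Z` such that `Z x` is the analytic continuation in `s` of the
Hurwitz zeta series `∑ (n+x)⁻ˢ`. -/
theorem kubert_identity (Z : ℝ → ℂ → ℂ)
    (hser : ∀ (x : ℝ), 0 < x → ∀ s : ℂ, 1 < s.re →
      HasSum (fun n : ℕ => 1 / ((n : ℂ) + (x : ℂ)) ^ s) (Z x s))
    (hdiff : ∀ (x : ℝ), 0 < x → ∀ s : ℂ, s ≠ 1 → DifferentiableAt ℂ (Z x) s)
    (q : ℕ) (hq : 0 < q) (x : ℝ) (hx : 0 < x) (s : ℂ) (hs : s ≠ 1) :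
    (q : ℂ) ^ s * Z x s = ∑ r ∈ Finset.range q, Z ((r + x) / q) s := by
  have hlhs : DifferentiableOn ℂ (fun t => (q : ℂ) ^ t * Z x t) {1}ᶜ := fun t ht =>
    ((differentiableAt_id.const_cpow (.inl (by exact_mod_cast hq.ne'))).mul
      (hdiff x hx t ht)).differentiableWithinAt
  have hrhs : DifferentiableOn ℂ (fun t => ∑ r ∈ range q, Z ((r + x) / q) t) {1}ᶜ := fun t ht =>
    (DifferentiableAt.fun_sum fun r _ => hdiff _ (by positivity) t ht).differentiableWithinAt
  exact eqOn_compl_one_of_eqOn_one_lt_re hlhs hrhs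
    (fun t ht => kubert_identity_of_one_lt_re Z hser hq hx ht) hs
end

section
/- Gauss's multiplication theorem: for every positive integer q and real x > 0, log Γ(x) = ∑_{r=0}^{q−1} log Γ((r+x)/q) − ((q−1)/2)·log(2π) − (1/2 − x)·log q. -/
/-!
Both sides are limits of Gauss's products: with `ℓ(y, n) = log (n ^ y (n - 1)! / (y ⋯ (y + n - 1)))`,
the `q n` factors `x + k` of `ℓ(x, q n)` are, up to the factor `q`, exactly the factors
`(r + x) / q + m` of the `ℓ((r + x) / q, n)`. Hence `∑ r, ℓ((r + x) / q, n) - ℓ(x, q n)` only involves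
`log n!`, `log (q n)!`, `log n` and `log q`, with `x` entering through `-x log q` alone, and
Stirling's formula gives its limit.
-/

open Real Filter Finset Topology
open scoped Nat

theorem Finset.sum_range_mul {M : Type*} [AddCommMonoid M] (f : ℕ → M) (q n : ℕ) :
    ∑ k ∈ range (q * n), f k = ∑ r ∈ range q, ∑ m ∈ range n, f (r + q * m) := by
  induction n with
  | zero => simp
  | succ n ih =>
    rw [Nat.mul_succ, sum_range_add, ih]
    simp only [sum_range_succ, sum_add_distrib, add_comm]

theorem sum_range_natCast {K : Type*} [Field K] [CharZero K] (n : ℕ) :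
    ∑ i ∈ range n, (i : K) = n * (n - 1) / 2 := by
  induction n with
  | zero => simp
  | succ n ih => rw [sum_range_succ, ih]; push_cast; ring

theorem log_factorial_eq_log_stirlingSeq {n : ℕ} (hn : n ≠ 0) :
    log n ! = log (Stirling.stirlingSeq n) + log 2 / 2 + (n + 1 / 2) * log n - n := by
  rw [Stirling.log_stirlingSeq_formula, log_mul two_ne_zero (by positivity),
    log_div (by positivity) (exp_ne_zero 1), log_exp]
  ring

theorem tendsto_log_stirlingSeq :
    Tendsto (fun n => log (Stirling.stirlingSeq n)) atTop (𝓝 (log π / 2)) := by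
  rw [← log_sqrt pi_pos.le]
  exact Stirling.tendsto_stirlingSeq_sqrt_pi.log (sqrt_ne_zero'.2 pi_pos)

theorem tendsto_mul_log_factorial_sub_log_factorial_mul {q : ℕ} (hq : q ≠ 0) :
    Tendsto (fun n : ℕ => q * log n ! - log (q * n)! - (q - 1) / 2 * log n
      + (q * n + 1 / 2) * log q) atTop (𝓝 ((q - 1) / 2 * log (2 * π))) := by
  have hlim := ((tendsto_log_stirlingSeq.const_mul (q : ℝ)).sub
    (tendsto_log_stirlingSeq.comp (tendsto_id.const_mul_atTop' (pos_of_ne_zero hq)))).add_const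
    ((q - 1) / 2 * log 2)
  rw [log_mul two_ne_zero pi_ne_zero]
  convert hlim.congr' ?_ using 2
  · ring
  filter_upwards [eventually_ne_atTop 0] with n hn
  simp only [Function.comp_apply, id]
  rw [log_factorial_eq_log_stirlingSeq hn, log_factorial_eq_log_stirlingSeq (mul_ne_zero hq hn)]
  push_cast
  rw [log_mul (by exact_mod_cast hq) (by exact_mod_cast hn)]
  ring

/-- `log (n ^ y * (n - 1)! / (y * (y + 1) * ⋯ * (y + n - 1)))`: Gauss's form of Euler's limit,
indexed so that its `q * n` factors regroup into `q` blocks of `n`. -/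
noncomputable def gaussLogGammaSeq (y : ℝ) (n : ℕ) : ℝ :=
  (y - 1) * log n + log n ! - ∑ k ∈ range n, log (y + k)

theorem gaussLogGammaSeq_eq (y : ℝ) (n : ℕ) :
    gaussLogGammaSeq y n = BohrMollerup.logGammaSeq y n + (log (n + y) - log n) := by
  rw [gaussLogGammaSeq, BohrMollerup.logGammaSeq, sum_range_succ, add_comm (n : ℝ)]
  ring

theorem tendsto_gaussLogGammaSeq {y : ℝ} (hy : 0 < y) :
    Tendsto (gaussLogGammaSeq y) atTop (𝓝 (log (Gamma y))) := by
  have hlim := (BohrMollerup.tendsto_log_gamma hy).add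
    ((tendsto_log_comp_add_sub_log y).comp tendsto_natCast_atTop_atTop)
  rw [add_zero] at hlim
  exact hlim.congr fun n => (gaussLogGammaSeq_eq y n).symm

theorem sum_log_div_add {q : ℕ} (hq : q ≠ 0) {x : ℝ} (hx : 0 < x) (n : ℕ) :
    ∑ r ∈ range q, ∑ m ∈ range n, log ((r + x) / q + m)
      = ∑ k ∈ range (q * n), log (x + k) - q * n * log q := by
  have hq' : (0 : ℝ) < q := by exact_mod_cast pos_of_ne_zero hq
  calc ∑ r ∈ range q, ∑ m ∈ range n, log ((r + x) / q + m)
      = ∑ k ∈ range (q * n), log ((x + k) / q) := by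
        rw [sum_range_mul]
        refine sum_congr rfl fun r _ => sum_congr rfl fun m _ => ?_
        push_cast
        congr 1
        field_simp
        ring
    _ = ∑ k ∈ range (q * n), log (x + k) - q * n * log q := by
        rw [sum_congr rfl fun k _ => log_div (by positivity) hq'.ne', sum_sub_distrib, sum_const,
          card_range, nsmul_eq_mul]
        push_cast
        ring

theorem sum_gaussLogGammaSeq_div_sub {q : ℕ} (hq : q ≠ 0) {x : ℝ} (hx : 0 < x) {n : ℕ}
    (hn : n ≠ 0) :
    ∑ r ∈ range q, gaussLogGammaSeq ((r + x) / q) n - gaussLogGammaSeq x (q * n)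
      = q * log n ! - log (q * n)! - (q - 1) / 2 * log n + (q * n - x + 1) * log q := by
  have hq' : (q : ℝ) ≠ 0 := by exact_mod_cast hq
  have hsum : ∑ r ∈ range q, ((r + x) / q - 1) = x - (q + 1) / 2 := by
    rw [sum_sub_distrib, ← sum_div, sum_add_distrib, sum_range_natCast]
    simp only [sum_const, card_range, nsmul_eq_mul, mul_one]
    field_simp
    ring
  simp only [gaussLogGammaSeq, sum_sub_distrib, sum_add_distrib, ← sum_mul, hsum,
    sum_log_div_add hq hx, sum_const, card_range, nsmul_eq_mul]
  push_cast
  rw [log_mul hq' (by exact_mod_cast hn)]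
  ring

theorem gauss_multiplication (q : ℕ) (hq : 0 < q) (x : ℝ) (hx : 0 < x) :
    Real.log (Real.Gamma x) =
      (∑ r ∈ Finset.range q, Real.log (Real.Gamma ((r + x) / q)))
        - ((q : ℝ) - 1) / 2 * Real.log (2 * π) - (1 / 2 - x) * Real.log q := by
  have hlim_Gamma : Tendsto
      (fun n => ∑ r ∈ range q, gaussLogGammaSeq ((r + x) / q) n - gaussLogGammaSeq x (q * n))
      atTop (𝓝 (∑ r ∈ range q, log (Gamma ((r + x) / q)) - log (Gamma x))) :=
    (tendsto_finsetSum _ fun r _ => tendsto_gaussLogGammaSeq (by positivity)).sub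
      ((tendsto_gaussLogGammaSeq hx).comp (tendsto_id.const_mul_atTop' hq))
  have hlim_Stirling : Tendsto
      (fun n => ∑ r ∈ range q, gaussLogGammaSeq ((r + x) / q) n - gaussLogGammaSeq x (q * n))
      atTop (𝓝 ((q - 1) / 2 * log (2 * π) + (1 / 2 - x) * log q)) := by
    refine ((tendsto_mul_log_factorial_sub_log_factorial_mul hq.ne').add_const
      ((1 / 2 - x) * log q)).congr' ?_
    filter_upwards [eventually_ne_atTop 0] with n hn
    rw [sum_gaussLogGammaSeq_div_sub hq.ne' hx hn]
    ring
  linarith [tendsto_nhds_unique hlim_Gamma hlim_Stirling]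
end

section
/- For positive integers p < q, ∑_{j=1}^{q} sin(2πjp/q)·ψ(j/q) = πq·(p/q − 1/2). -/
/-!
Pairing `j` with `q - j` and using the reflection formula `ψ(x) - ψ(1 - x) = -π cot (π x)`
turns twice the sum into `-π ∑_{0<j<q} sin (2 p θ_j) cot θ_j` with `θ_j = π j / q`. Since
`sin (2 p θ) cot θ = ∑_{k<p} (cos (2 k θ) + cos (2 (k + 1) θ))` and `∑_{j<q} cos (2 k θ_j)` vanishes
unless `q ∣ k`, summing over all `j < q` gives `q`, and removing the term `j = 0`, which is `2 p`,
leaves `q - 2 p`.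
-/

open Real

/-- The digamma function `ψ = Γ'/Γ`. -/
noncomputable def digamma (x : ℝ) : ℝ := deriv Real.Gamma x / Real.Gamma x

open Finset

theorem digamma_eq_logDeriv : digamma = logDeriv Gamma := rfl

theorem digamma_sub_digamma_one_sub {x : ℝ} (hx : ∀ n : ℤ, x ≠ n) :
    digamma x - digamma (1 - x) = -π * cot (π * x) := by
  have hx_ne : ∀ m : ℕ, x ≠ -m := fun m => by exact_mod_cast hx (-m)
  have hx'_ne : ∀ m : ℕ, 1 - x ≠ -m := fun m h => hx (m + 1) (by push_cast; linarith)
  have hsin : sin (π * x) ≠ 0 := by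
    rw [Ne, sin_eq_zero_iff]
    rintro ⟨n, hn⟩
    exact hx n (mul_left_cancel₀ pi_ne_zero (by linarith))
  have hGamma_one_sub : logDeriv (fun y => Gamma (1 - y)) x = -digamma (1 - x) := by
    have := logDeriv_comp (f := Gamma) (g := fun y => 1 - y) (x := x)
      (differentiableAt_Gamma hx'_ne) (by fun_prop)
    simpa [Function.comp_def, digamma_eq_logDeriv] using this
  have hsin_pi_mul : logDeriv (fun y => sin (π * y)) x = π * cot (π * x) := by
    have := logDeriv_comp (f := sin) (g := fun y => π * y) (x := x)
      differentiableAt_sin (by fun_prop)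
    simpa [Function.comp_def, logDeriv_sin, mul_comm] using this
  have hreflect : logDeriv (fun y => Gamma y * Gamma (1 - y)) x =
      logDeriv (fun y => π / sin (π * y)) x := by
    simp only [Gamma_mul_Gamma_one_sub]
  rwa [logDeriv_mul (g := fun y => Gamma (1 - y)) x (Gamma_ne_zero hx_ne) (Gamma_ne_zero hx'_ne)
      (differentiableAt_Gamma hx_ne) ((differentiableAt_Gamma hx'_ne).comp x (by fun_prop)),
    logDeriv_div x pi_ne_zero hsin (by fun_prop) (by fun_prop), logDeriv_const, hGamma_one_sub,
    hsin_pi_mul, ← digamma_eq_logDeriv, ← sub_eq_add_neg, Pi.zero_apply, zero_sub, ← neg_mul] at hreflect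

theorem sum_range_cos_eq_zero_of_not_dvd {q k : ℕ} (hk : ¬q ∣ k) :
    ∑ j ∈ range q, cos (2 * k * (π * j / q)) = 0 := by
  rcases eq_or_ne q 0 with rfl | hq
  · simp
  set ζ := Complex.exp (2 * π * Complex.I / q) ^ k
  have hζ : IsPrimitiveRoot (Complex.exp (2 * π * Complex.I / q)) q := Complex.isPrimitiveRoot_exp q hq
  have hζ_ne_one : ζ ≠ 1 := by rwa [Ne, hζ.pow_eq_one_iff_dvd]
  have hζ_pow : ζ ^ q = 1 := by rw [pow_right_comm, hζ.pow_eq_one, one_pow]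
  have hre : ∀ j : ℕ, cos (2 * k * (π * j / q)) = (ζ ^ j).re := by
    intro j
    rw [← pow_mul, ← Complex.exp_nat_mul, ← Complex.exp_ofReal_mul_I_re]
    congr 2
    push_cast
    ring
  simp_rw [hre, ← Complex.re_sum, geom_sum_eq hζ_ne_one, hζ_pow, sub_self, zero_div, Complex.zero_re]

theorem sin_two_nat_mul_mul_cos (p : ℕ) (θ : ℝ) :
    sin (2 * p * θ) * cos θ =
      sin θ * ∑ k ∈ range p, (cos (2 * k * θ) + cos (2 * (k + 1) * θ)) := by
  induction p with
  | zero => simp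
  | succ n ih =>
    rw [sum_range_succ, mul_add, ← ih]
    push_cast
    rw [show 2 * ((n : ℝ) + 1) * θ = 2 * n * θ + 2 * θ by ring, sin_add, cos_add, sin_two_mul,
      cos_two_mul]
    linear_combination 2 * sin (2 * n * θ) * cos θ * sin_sq_add_cos_sq θ

theorem sum_range_sum_range_cos_add_cos {p q : ℕ} (hp : 0 < p) (hpq : p < q) :
    ∑ j ∈ range q, ∑ k ∈ range p, (cos (2 * k * (π * j / q)) + cos (2 * (k + 1) * (π * j / q))) =
      q := by
  have hcos : ∀ k < q, ∑ j ∈ range q, cos (2 * k * (π * j / q)) = if k = 0 then (q : ℝ) else 0 := by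
    intro k hk
    split_ifs with h
    · simp [h]
    · exact sum_range_cos_eq_zero_of_not_dvd fun hd => h (Nat.eq_zero_of_dvd_of_lt hd hk)
  calc _ = ∑ k ∈ range p, ((if k = 0 then (q : ℝ) else 0) + 0) := by
        rw [sum_comm]
        refine sum_congr rfl fun k hk => ?_
        rw [mem_range] at hk
        rw [sum_add_distrib, hcos k (by omega), ← Nat.cast_succ, hcos (k + 1) (by omega),
          if_neg k.succ_ne_zero]
    _ = q := by simp [hp]

theorem sum_Ico_sin_mul_cot {p q : ℕ} (hp : 0 < p) (hpq : p < q) :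
    ∑ j ∈ Ico 1 q, sin (2 * π * j * p / q) * cot (π * j / q) = q - 2 * p := by
  set K : ℝ → ℝ := fun θ => ∑ k ∈ range p, (cos (2 * k * θ) + cos (2 * (k + 1) * θ)) with hK
  have hterm : ∀ j ∈ Ico 1 q, sin (2 * π * j * p / q) * cot (π * j / q) = K (π * j / q) := by
    intro j hj
    rw [mem_Ico] at hj
    have hj0 : (0 : ℝ) < j := Nat.cast_pos.mpr hj.1
    have hq0 : (0 : ℝ) < q := Nat.cast_pos.mpr (by omega)
    have hsin : sin (π * j / q) ≠ 0 := by
      refine (sin_pos_of_pos_of_lt_pi (by positivity) ?_).ne'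
      rw [mul_div_assoc, mul_lt_iff_lt_one_right pi_pos, div_lt_one (by positivity)]
      exact_mod_cast hj.2
    rw [cot_eq_cos_div_sin, mul_div_assoc', div_eq_iff hsin,
      show 2 * π * j * p / q = 2 * p * (π * j / q) by ring, sin_two_nat_mul_mul_cos, mul_comm]
  have hK_zero : K (π * (0 : ℕ) / q) = 2 * p := by
    simp only [hK, Nat.cast_zero, mul_zero, zero_div, cos_zero, sum_const, card_range, nsmul_eq_mul]
    ring
  have hK_sum : ∑ j ∈ range q, K (π * j / q) = q := by
    simpa only [hK, mul_div_assoc] using sum_range_sum_range_cos_add_cos hp hpq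
  rw [range_eq_Ico, sum_eq_sum_Ico_succ_bot (by omega), hK_zero] at hK_sum
  rw [sum_congr rfl hterm]
  linarith

theorem ne_intCast_of_pos_of_lt_one {x : ℝ} (h0 : 0 < x) (h1 : x < 1) (n : ℤ) : x ≠ n := by
  rintro rfl
  have : (0 : ℤ) < n ∧ n < 1 := ⟨by exact_mod_cast h0, by exact_mod_cast h1⟩
  omega

theorem sin_two_pi_mul_sub_mul_div {q : ℝ} (hq : q ≠ 0) (p : ℕ) (x : ℝ) :
    sin (2 * π * (q - x) * p / q) = -sin (2 * π * x * p / q) := by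
  rw [← sin_nat_mul_two_pi_sub _ p]
  congr 1
  field_simp

theorem sin_mul_digamma_add_sin_mul_digamma_sub {p q j : ℕ} (hj0 : 0 < j) (hjq : j < q) :
    sin (2 * π * j * p / q) * digamma (j / q) +
        sin (2 * π * (q - j : ℕ) * p / q) * digamma ((q - j : ℕ) / q) =
      -π * (sin (2 * π * j * p / q) * cot (π * j / q)) := by
  have hq : (0 : ℝ) < q := Nat.cast_pos.mpr (hj0.trans hjq)
  have hx : ∀ n : ℤ, (j / q : ℝ) ≠ n := ne_intCast_of_pos_of_lt_one
    (div_pos (Nat.cast_pos.mpr hj0) hq) ((div_lt_one hq).mpr (Nat.cast_lt.mpr hjq))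
  have hdigamma := digamma_sub_digamma_one_sub hx
  rw [← mul_div_assoc] at hdigamma
  rw [Nat.cast_sub hjq.le, sin_two_pi_mul_sub_mul_div hq.ne', sub_div, div_self hq.ne']
  linear_combination sin (2 * π * j * p / q) * hdigamma

theorem sum_sin_digamma (p q : ℕ) (hp : 0 < p) (hpq : p < q) :
    ∑ j ∈ Finset.Icc 1 q, Real.sin (2 * π * j * p / q) * digamma (j / q) =
      π * q * ((p : ℝ) / q - 1 / 2) := by
  set g : ℕ → ℝ := fun j => sin (2 * π * j * p / q) * digamma (j / q) with hg
  have hq : (q : ℝ) ≠ 0 := Nat.cast_ne_zero.mpr (by omega)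
  have hg_top : g q = 0 := by
    have h := sin_two_pi_mul_sub_mul_div hq p 0
    simp only [sub_zero, mul_zero, zero_mul, zero_div, sin_zero, neg_zero] at h
    simp only [hg, h, zero_mul]
  calc ∑ j ∈ Icc 1 q, g j = ∑ j ∈ Ico 1 q, g j := by
        rw [← Ico_add_one_right_eq_Icc, sum_Ico_succ_top (by omega), hg_top, add_zero]
    _ = (∑ j ∈ Ico 1 q, (g j + g (q - j))) / 2 := by
        rw [sum_add_distrib, sum_Ico_reflect _ _ (by omega), Nat.add_sub_cancel,
          Nat.add_sub_cancel_left]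
        ring
    _ = -π * (q - 2 * p) / 2 := by
        rw [sum_congr rfl fun j hj => sin_mul_digamma_add_sin_mul_digamma_sub
          (mem_Ico.mp hj).1 (mem_Ico.mp hj).2, ← mul_sum, sum_Ico_sin_mul_cot hp hpq]
    _ = π * q * ((p : ℝ) / q - 1 / 2) := by
        field_simp
        ring
end

section
/- Gauss's digamma theorem: for positive integers p < q, ψ(p/q) = −γ − log(2πq) − (π/2)·cot(pπ/q) − 2·∑_{r=1}^{q−1} cos(2πrp/q)·log Γ(r/q). -/
open Real

/-!
Convexity of `log Γ` (Bohr–Mollerup) gives `ψ(x) = lim (log n - ∑_{k<n} 1 / (x + k))`. For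
`x = p / q` the sum is `∑_{m ≡ p (q)} q / m`, and filtering with the `q`-th roots of unity `ζ ^ r`
turns `ψ(p/q) + γ + log q` into `∑_{r=1}^{q-1} ζ^{-pr} log (1 - ζ^r)`, the series
`∑ ζ^{rm} / m = -log (1 - ζ^r)` being summed on the unit circle by Dirichlet's test and Abel's
limit theorem. Taking real parts, `log (1 - e^{2ix}) = log (2 sin x) + i (x - π/2)`, the reflection
formula `Γ(x) Γ(1 - x) = π / sin (π x)` and the sums `∑ ζ^{-pr} = -1`,
`∑ r ζ^{-pr} = q / (ζ^{-p} - 1)` give the closed form.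
-/

open Filter Topology Finset
open Complex (I)

section Digamma

variable {x : ℝ}

lemma ne_neg_natCast_of_pos (hx : 0 < x) (m : ℕ) : x ≠ -m :=
  ((neg_nonpos.2 m.cast_nonneg).trans_lt hx).ne'

lemma differentiableAt_log_Gamma (hx : 0 < x) : DifferentiableAt ℝ (log ∘ Gamma) x :=
  (differentiableAt_Gamma (ne_neg_natCast_of_pos hx)).log
    (Gamma_ne_zero (ne_neg_natCast_of_pos hx))

lemma digamma_eq_deriv_log_Gamma (hx : 0 < x) : digamma x = deriv (log ∘ Gamma) x := by
  rw [digamma, Function.comp_def,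
    deriv.log (differentiableAt_Gamma (ne_neg_natCast_of_pos hx)) (Gamma_pos_of_pos hx).ne']

lemma log_Gamma_add_one (hx : 0 < x) : (log ∘ Gamma) (x + 1) = (log ∘ Gamma) x + log x := by
  simp only [Function.comp_apply, Gamma_add_one hx.ne',
    log_mul hx.ne' (Gamma_pos_of_pos hx).ne', add_comm]

lemma deriv_log_Gamma_add_one (hx : 0 < x) :
    deriv (log ∘ Gamma) (x + 1) = deriv (log ∘ Gamma) x + 1 / x := by
  rw [← deriv_comp_add_const, one_div, ← deriv_log,
    ← deriv_add (differentiableAt_log_Gamma hx) (differentiableAt_log hx.ne')]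
  exact EventuallyEq.deriv_eq (eventually_gt_nhds hx |>.mono fun y hy ↦ log_Gamma_add_one hy)

lemma deriv_log_Gamma_add_nat (hx : 0 < x) (n : ℕ) :
    deriv (log ∘ Gamma) (x + n) = deriv (log ∘ Gamma) x + ∑ k ∈ range n, 1 / (x + k) := by
  induction n with
  | zero => simp
  | succ n ih =>
    rw [Nat.cast_succ, ← add_assoc, deriv_log_Gamma_add_one (by positivity), ih, sum_range_succ,
      add_assoc]

-- Convexity bounds the derivative by the slopes over `[y - 1, y]` and `[y, y + 1]`, which the
-- functional equation evaluates to `log (y - 1)` and `log y`.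
lemma deriv_log_Gamma_mem_Icc {y : ℝ} (hy : 1 < y) :
    deriv (log ∘ Gamma) y ∈ Set.Icc (log (y - 1)) (log y) := by
  have hy₀ : 0 < y := by linarith
  have hy₁ : 0 < y - 1 := by linarith
  have hd := differentiableAt_log_Gamma hy₀
  constructor
  · refine le_of_eq_of_le ?_ (convexOn_log_Gamma.slope_le_deriv hy₁ hy₀ (by linarith) hd)
    have := log_Gamma_add_one hy₁
    rw [sub_add_cancel] at this
    rw [slope_def_field, this, sub_sub_cancel, div_one, add_sub_cancel_left]
  · refine (convexOn_log_Gamma.deriv_le_slope hy₀ (by positivity : 0 < y + 1) (by linarith)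
      hd).trans_eq ?_
    rw [slope_def_field, log_Gamma_add_one hy₀, add_sub_cancel_left, add_sub_cancel_left, div_one]

lemma tendsto_log_sub_sum_inv_add_digamma (hx : 0 < x) :
    Tendsto (fun n : ℕ ↦ log n - ∑ k ∈ range n, 1 / (x + k)) atTop (𝓝 (digamma x)) := by
  have hlog (y : ℝ) : Tendsto (fun n : ℕ ↦ log n - log (y + n)) atTop (𝓝 0) := by
    simpa [add_comm] using ((tendsto_log_comp_add_sub_log y).comp tendsto_natCast_atTop_atTop).neg
  have hgap : Tendsto (fun n : ℕ ↦ log n - deriv (log ∘ Gamma) (x + n)) atTop (𝓝 0) := by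
    refine tendsto_of_tendsto_of_tendsto_of_le_of_le' (hlog x) (hlog (x - 1)) ?_ ?_ <;>
      filter_upwards [eventually_ge_atTop 1] with n hn <;>
      have hbd := deriv_log_Gamma_mem_Icc (y := x + n) (by
        have : (1 : ℝ) ≤ n := by exact_mod_cast hn
        linarith)
    · linarith [hbd.2]
    · rw [sub_add_eq_add_sub]
      linarith [hbd.1]
  have hsum (n : ℕ) : log n - ∑ k ∈ range n, 1 / (x + k)
      = deriv (log ∘ Gamma) x + (log n - deriv (log ∘ Gamma) (x + n)) := by
    rw [deriv_log_Gamma_add_nat hx]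
    ring
  simpa only [digamma_eq_deriv_log_Gamma hx, hsum, add_zero] using hgap.const_add _

end Digamma

section UnitCircle

variable {ω : ℂ}

lemma one_sub_mem_slitPlane_of_norm_eq_one (hω : ‖ω‖ = 1) (h1 : ω ≠ 1) :
    1 - ω ∈ Complex.slitPlane := by
  rw [Complex.mem_slitPlane_iff, Complex.sub_re, Complex.one_re, sub_pos]
  refine .inl <| (lt_or_eq_of_le (hω ▸ Complex.re_le_norm ω)).resolve_right fun hre ↦ h1 ?_
  have him := (Complex.nonneg_iff.1 (Complex.re_eq_norm.1 (hre.trans hω.symm))).2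
  exact Complex.ext (by simpa using hre) (by simpa using him.symm)

lemma norm_geom_sum_le (hω : ‖ω‖ = 1) (h1 : ω ≠ 1) (n : ℕ) :
    ‖∑ i ∈ range n, ω ^ i‖ ≤ 2 / ‖ω - 1‖ := by
  rw [geom_sum_eq h1, norm_div]
  gcongr
  calc ‖ω ^ n - 1‖ ≤ ‖ω ^ n‖ + ‖(1 : ℂ)‖ := norm_sub_le _ _
    _ = 2 := by rw [norm_pow, hω]; norm_num

lemma cauchySeq_sum_range_pow_div (hω : ‖ω‖ = 1) (h1 : ω ≠ 1) :
    CauchySeq fun n ↦ ∑ m ∈ range n, ω ^ m / m := by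
  have hanti : Antitone fun i : ℕ ↦ 1 / ((i : ℝ) + 1) := fun i j hij ↦
    one_div_le_one_div_of_le (by positivity) (by exact_mod_cast Nat.add_le_add_right hij 1)
  have hbd (n : ℕ) : ‖∑ i ∈ range n, ω ^ (i + 1)‖ ≤ 2 / ‖ω - 1‖ := by
    simpa [pow_succ, ← sum_mul, hω] using norm_geom_sum_le hω h1 n
  rw [← cauchySeq_shift 1]
  convert hanti.cauchySeq_series_mul_of_tendsto_zero_of_bounded
    tendsto_one_div_add_atTop_nhds_zero_nat hbd using 2 with n
  rw [sum_range_succ']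
  simp [div_eq_inv_mul]

-- The `m = 0` term is `ω ^ 0 / 0 = 0`.
lemma tendsto_sum_range_pow_div (hω : ‖ω‖ = 1) (h1 : ω ≠ 1) :
    Tendsto (fun n ↦ ∑ m ∈ range n, ω ^ m / m) atTop (𝓝 (-Complex.log (1 - ω))) := by
  obtain ⟨l, hl⟩ := cauchySeq_tendsto_of_complete (cauchySeq_sum_range_pow_div hω h1)
  suffices l = -Complex.log (1 - ω) from this ▸ hl
  refine tendsto_nhds_unique (Complex.tendsto_tsum_powerSeries_nhdsWithin_lt hl) ?_
  rw [tendsto_map'_iff]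
  have hcont : ContinuousAt (fun x : ℝ ↦ -Complex.log (1 - ω * x)) 1 :=
    ((continuousAt_clog (by
      simpa using one_sub_mem_slitPlane_of_norm_eq_one hω h1)).comp (by fun_prop)).neg
  have hlim : Tendsto (fun x : ℝ ↦ -Complex.log (1 - ω * x)) (𝓝[<] 1)
      (𝓝 (-Complex.log (1 - ω))) := by
    simpa using hcont.tendsto.mono_left nhdsWithin_le_nhds
  refine hlim.congr' ?_
  filter_upwards [Ioo_mem_nhdsLT (show (-1 : ℝ) < 1 by norm_num)] with x hx
  have hωx : ‖ω * x‖ < 1 := by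
    rw [norm_mul, hω, one_mul, Complex.norm_real, Real.norm_eq_abs, abs_lt]
    exact hx
  rw [Function.comp_apply, ← (Complex.hasSum_taylorSeries_neg_log hωx).tsum_eq]
  congr 1 with n
  ring

end UnitCircle

section RootsOfUnityFilter

variable {K : Type*} [Field K] {ζ : K} {p q : ℕ}

lemma IsPrimitiveRoot.geom_sum_zpow (hζ : IsPrimitiveRoot ζ q) (j : ℤ) :
    ∑ r ∈ range q, (ζ ^ j) ^ r = if (q : ℤ) ∣ j then (q : K) else 0 := by
  split_ifs with h
  · simp [(hζ.zpow_eq_one_iff_dvd j).2 h]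
  · have hpow : (ζ ^ j) ^ q = 1 := by
      rw [← zpow_natCast, ← zpow_mul, mul_comm, zpow_mul, zpow_natCast, hζ.pow_eq_one, one_zpow]
    rw [geom_sum_eq (mt (hζ.zpow_eq_one_iff_dvd j).1 h), hpow, sub_self, zero_div]

lemma IsPrimitiveRoot.sum_geom_sum_zpow_sub_mul (hζ : IsPrimitiveRoot ζ q) (hpq : p < q)
    (f : ℕ → K) (M : ℕ) :
    ∑ m ∈ range M, (∑ r ∈ range q, (ζ ^ ((m : ℤ) - p)) ^ r) * f m
      = q * ∑ m ∈ range M with m % q = p, f m := by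
  have hmod (m : ℕ) : (q : ℤ) ∣ (m : ℤ) - p ↔ m % q = p := by
    rw [← Nat.modEq_iff_dvd, Nat.ModEq, Nat.mod_eq_of_lt hpq, eq_comm]
  simp only [hζ.geom_sum_zpow, hmod, ite_mul, zero_mul, ← sum_filter, mul_sum]

lemma sum_range_mul_add_one_filter_mod_eq {M : Type*} [AddCommMonoid M] (hp : 0 < p)
    (hpq : p < q) (f : ℕ → M) (N : ℕ) :
    ∑ m ∈ range (q * N + 1) with m % q = p, f m = ∑ k ∈ range N, f (p + q * k) := by
  have hq : 0 < q := hp.trans hpq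
  refine sum_nbij' (· / q) (p + q * ·) (fun m hm ↦ ?_) (fun k hk ↦ ?_) (fun m hm ↦ ?_)
    (fun k _ ↦ ?_) (fun m hm ↦ ?_)
  all_goals simp only [Finset.mem_filter, Finset.mem_range] at *
  · have := Nat.div_add_mod m q
    have hne : m ≠ q * N := fun h ↦ by rw [h, Nat.mul_mod_right] at hm; omega
    rw [Nat.div_lt_iff_lt_mul hq, mul_comm]
    omega
  · have := Nat.mul_le_mul_left q (Nat.succ_le_of_lt hk)
    rw [Nat.add_mul_mod_self_left, Nat.mod_eq_of_lt hpq, Nat.mul_succ] at *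
    omega
  · have := Nat.div_add_mod m q
    omega
  · rw [Nat.add_mul_div_left _ _ hq, Nat.div_eq_of_lt hpq, zero_add]
  · have := Nat.div_add_mod m q
    rw [show p + q * (m / q) = m by omega]

lemma IsPrimitiveRoot.sum_range_div_add_mul [CharZero K] (hζ : IsPrimitiveRoot ζ q) (hp : 0 < p)
    (hpq : p < q) (N : ℕ) :
    ∑ k ∈ range N, (q : K) / (p + q * k)
      = ∑ m ∈ range (q * N + 1), 1 / (m : K)
        + ∑ r ∈ Ico 1 q, (ζ ^ p)⁻¹ ^ r * ∑ m ∈ range (q * N + 1), (ζ ^ r) ^ m / m := by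
  have hζ₀ : ζ ≠ 0 := hζ.ne_zero (hp.trans hpq).ne'
  calc ∑ k ∈ range N, (q : K) / (p + q * k)
      = q * ∑ m ∈ range (q * N + 1) with m % q = p, 1 / (m : K) := by
        rw [sum_range_mul_add_one_filter_mod_eq hp hpq, mul_sum]
        push_cast
        simp only [mul_one_div]
    _ = ∑ m ∈ range (q * N + 1), (∑ r ∈ range q, (ζ ^ ((m : ℤ) - p)) ^ r) * (1 / (m : K)) :=
        (hζ.sum_geom_sum_zpow_sub_mul hpq _ _).symm
    _ = ∑ r ∈ range q, (ζ ^ p)⁻¹ ^ r * ∑ m ∈ range (q * N + 1), (ζ ^ r) ^ m / m := by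
        simp only [sum_mul, mul_sum]
        rw [sum_comm]
        refine sum_congr rfl fun r _ ↦ sum_congr rfl fun m _ ↦ ?_
        rw [zpow_sub₀ hζ₀, zpow_natCast, zpow_natCast]
        ring
    _ = _ := by
        rw [range_eq_Ico, sum_eq_sum_Ico_succ_bot (hp.trans hpq)]
        simp

end RootsOfUnityFilter

section LimitFormula

local notation "γ" => eulerMascheroniConstant

lemma sum_range_succ_one_div_eq_harmonic (M : ℕ) :
    ∑ m ∈ range (M + 1), 1 / (m : ℝ) = harmonic M := by
  rw [sum_range_succ', harmonic]
  push_cast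
  simp

lemma tendsto_log_sub_sum_range_mul_add_one_inv {q : ℕ} (hq : 0 < q) :
    Tendsto (fun N : ℕ ↦ log N - ∑ m ∈ range (q * N + 1), 1 / (m : ℝ)) atTop
      (𝓝 (-γ - log q)) := by
  have hqN : Tendsto (q * ·) atTop atTop := tendsto_id.const_mul_atTop' hq
  have := ((tendsto_harmonic_sub_log.comp hqN).add_const (log q)).neg
  rw [neg_add'] at this
  refine this.congr' ?_
  filter_upwards [eventually_gt_atTop 0] with N hN
  rw [Function.comp_apply, sum_range_succ_one_div_eq_harmonic, Nat.cast_mul,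
    log_mul (by positivity) (by positivity)]
  ring

variable {ζ : ℂ} {p q : ℕ}

lemma IsPrimitiveRoot.tendsto_sum_range_mul_add_one_pow_div (hζ : IsPrimitiveRoot ζ q)
    {r : ℕ} (hr : r ∈ Ico 1 q) :
    Tendsto (fun N : ℕ ↦ ∑ m ∈ range (q * N + 1), (ζ ^ r) ^ m / m) atTop
      (𝓝 (-Complex.log (1 - ζ ^ r))) := by
  rw [mem_Ico] at hr
  have hq : 0 < q := by omega
  refine (tendsto_sum_range_pow_div ?_ (hζ.pow_ne_one_of_pos_of_lt (by omega) hr.2)).comp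
    ((tendsto_add_atTop_nat 1).comp (tendsto_id.const_mul_atTop' hq))
  rw [norm_pow, hζ.norm'_eq_one hq.ne', one_pow]

theorem IsPrimitiveRoot.digamma_div_eq (hζ : IsPrimitiveRoot ζ q) (hp : 0 < p) (hpq : p < q) :
    (digamma (p / q) : ℂ)
      = (-γ - log q : ℝ) + ∑ r ∈ Ico 1 q, (ζ ^ p)⁻¹ ^ r * Complex.log (1 - ζ ^ r) := by
  have hq : 0 < q := hp.trans hpq
  have hreal : Tendsto (fun N : ℕ ↦ log N - ∑ k ∈ range N, (q : ℝ) / (p + q * k)) atTop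
      (𝓝 (digamma (p / q))) := by
    refine (tendsto_log_sub_sum_inv_add_digamma (by positivity)).congr fun N ↦ ?_
    congr 1
    refine sum_congr rfl fun k _ ↦ ?_
    field_simp
  have hcomplex : Tendsto (fun N : ℕ ↦ ((log N - ∑ m ∈ range (q * N + 1), 1 / (m : ℝ) : ℝ) : ℂ)
      - ∑ r ∈ Ico 1 q, (ζ ^ p)⁻¹ ^ r * ∑ m ∈ range (q * N + 1), (ζ ^ r) ^ m / m) atTop
      (𝓝 (((-γ - log q : ℝ) : ℂ)
        - ∑ r ∈ Ico 1 q, (ζ ^ p)⁻¹ ^ r * -Complex.log (1 - ζ ^ r))) :=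
    ((Complex.continuous_ofReal.tendsto _).comp
      (tendsto_log_sub_sum_range_mul_add_one_inv hq)).sub
      (tendsto_finsetSum _ fun r hr ↦
        (hζ.tendsto_sum_range_mul_add_one_pow_div hr).const_mul _)
  have := tendsto_nhds_unique ((Complex.continuous_ofReal.tendsto _).comp hreal) <|
    hcomplex.congr fun N ↦ by
      rw [Function.comp_apply, Complex.ofReal_sub, Complex.ofReal_sum]
      push_cast
      rw [hζ.sum_range_div_add_mul hp hpq N]
      ring
  rw [this, sub_eq_add_neg, ← sum_neg_distrib]
  simp

end LimitFormula

section ComplexExp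

lemma Complex.one_sub_exp_two_mul_mul_I (x : ℂ) :
    1 - exp (2 * x * I) = 2 * sin x * exp ((x - π / 2) * I) := by
  rw [two_sin, show (x - π / 2) * I = x * I - π / 2 * I by ring, exp_sub, exp_pi_div_two_mul_I,
    neg_mul, exp_neg, show 2 * x * I = x * I + x * I by ring, exp_add]
  field_simp

lemma Complex.inv_exp_two_mul_mul_I_sub_one {x : ℂ} (hx : sin x ≠ 0) :
    (exp (2 * x * I) - 1)⁻¹ = -1 / 2 - I / 2 * (cos x / sin x) := by
  refine inv_eq_of_mul_eq_one_right ?_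
  have h : exp (2 * x * I) - 1 = 2 * I * sin x * (cos x + sin x * I) := by
    rw [← exp_mul_I, ← neg_sub, one_sub_exp_two_mul_mul_I,
      show (x - π / 2) * I = x * I - π / 2 * I by ring, exp_sub, exp_pi_div_two_mul_I]
    field_simp
    exact I_sq.symm
  rw [h]
  field_simp
  linear_combination (-(cos x ^ 2 + sin x ^ 2) - I * sin x * cos x) * I_sq + sin_sq_add_cos_sq x

end ComplexExp

section RootOfUnitySums

variable {K : Type*} [Field K] {w : K} {q : ℕ}

lemma sub_one_mul_sum_range_mul_pow_add_mul_geom_sum {R : Type*} [CommRing R] (z : R) (n : ℕ) :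
    (z - 1) * ∑ r ∈ range n, (r : R) * z ^ r + z * ∑ r ∈ range n, z ^ r = n * z ^ n := by
  induction n with
  | zero => simp
  | succ n ih =>
    rw [sum_range_succ, sum_range_succ, mul_add, mul_add, add_add_add_comm, ih]
    push_cast
    ring

lemma geom_sum_eq_zero_of_pow_eq_one (hw : w ^ q = 1) (hw₁ : w ≠ 1) :
    ∑ r ∈ range q, w ^ r = 0 := by
  rw [geom_sum_eq hw₁, hw, sub_self, zero_div]

lemma sum_range_mul_pow_eq_of_pow_eq_one (hw : w ^ q = 1) (hw₁ : w ≠ 1) :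
    ∑ r ∈ range q, (r : K) * w ^ r = q / (w - 1) := by
  have := sub_one_mul_sum_range_mul_pow_add_mul_geom_sum w q
  rw [geom_sum_eq_zero_of_pow_eq_one hw hw₁, hw, mul_zero, add_zero, mul_one] at this
  rw [← this, mul_div_cancel_left₀ _ (sub_ne_zero.2 hw₁)]

lemma sum_Ico_pow_eq_neg_one_of_pow_eq_one (hq : 0 < q) (hw : w ^ q = 1) (hw₁ : w ≠ 1) :
    ∑ r ∈ Ico 1 q, w ^ r = -1 := by
  have := geom_sum_eq_zero_of_pow_eq_one hw hw₁
  rw [range_eq_Ico, sum_eq_sum_Ico_succ_bot hq, pow_zero, add_comm, ← eq_neg_iff_add_eq_zero]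
    at this
  exact this

lemma sum_Ico_pow_mul_div_sub_half [CharZero K] (hq : 0 < q) (hw : w ^ q = 1) (hw₁ : w ≠ 1) :
    ∑ r ∈ Ico 1 q, w ^ r * ((r : K) / q - 1 / 2) = (w - 1)⁻¹ + 1 / 2 := by
  have hmul := sum_range_mul_pow_eq_of_pow_eq_one hw hw₁
  rw [range_eq_Ico, sum_eq_sum_Ico_succ_bot hq, Nat.cast_zero, zero_mul, zero_add] at hmul
  have hq' : (q : K) ≠ 0 := by exact_mod_cast hq.ne'
  simp only [mul_sub, ← mul_div_assoc, ← sum_div, sum_sub_distrib, ← sum_mul,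
    sum_Ico_pow_eq_neg_one_of_pow_eq_one hq hw hw₁]
  rw [show ∑ r ∈ Ico 1 q, w ^ r * r = q / (w - 1) by simpa only [mul_comm] using hmul]
  field_simp
  ring

lemma IsPrimitiveRoot.inv_pow_pow_eq_one {ζ : K} (hζ : IsPrimitiveRoot ζ q) (p : ℕ) :
    (ζ ^ p)⁻¹ ^ q = 1 := by
  rw [inv_pow, pow_right_comm, hζ.pow_eq_one, one_pow, inv_one]

lemma IsPrimitiveRoot.inv_pow_ne_one {ζ : K} {p : ℕ} (hζ : IsPrimitiveRoot ζ q) (hp : 0 < p)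
    (hpq : p < q) : (ζ ^ p)⁻¹ ≠ 1 :=
  inv_ne_one.2 (hζ.pow_ne_one_of_pos_of_lt hp.ne' hpq)

end RootOfUnitySums

section CyclotomicEvaluation

lemma log_one_sub_exp_two_mul_mul_I {x : ℝ} (h₀ : 0 < x) (hπ : x < π) :
    Complex.log (1 - Complex.exp (2 * x * I)) = log (2 * sin x) + (x - π / 2 : ℝ) * I := by
  have hs : 0 < 2 * sin x := mul_pos two_pos (sin_pos_of_pos_of_lt_pi h₀ hπ)
  rw [Complex.one_sub_exp_two_mul_mul_I, ← Complex.ofReal_sin, ← Complex.ofReal_ofNat,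
    ← Complex.ofReal_mul, ← Complex.ofReal_div, ← Complex.ofReal_sub,
    Complex.log_ofReal_mul hs (Complex.exp_ne_zero _), Complex.log_exp]
  all_goals
    rw [Complex.mul_I_im, Complex.ofReal_re]
    linarith [pi_pos]

variable {p q : ℕ}

lemma pi_mul_div_lt_pi {r : ℕ} (hrq : r < q) : π * r / q < π := by
  rw [div_lt_iff₀ (by exact_mod_cast (Nat.zero_le r).trans_lt hrq)]
  nlinarith [pi_pos, (Nat.cast_lt (α := ℝ)).2 hrq]

lemma exp_two_pi_mul_I_div_pow (q n : ℕ) :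
    Complex.exp (2 * π * I / q) ^ n = Complex.exp (2 * (π * n / q : ℝ) * I) := by
  rw [← Complex.exp_nat_mul]
  push_cast
  ring_nf

lemma inv_exp_two_pi_mul_I_div_pow (q n : ℕ) :
    (Complex.exp (2 * π * I / q) ^ n)⁻¹ = Complex.exp (2 * (-(n * π / q) : ℝ) * I) := by
  rw [exp_two_pi_mul_I_div_pow, ← Complex.exp_neg]
  push_cast
  ring_nf

lemma re_inv_exp_two_pi_mul_I_div_pow_pow (p q r : ℕ) :
    ((Complex.exp (2 * π * I / q) ^ p)⁻¹ ^ r).re = cos (2 * π * r * p / q) := by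
  rw [inv_exp_two_pi_mul_I_div_pow, ← Complex.exp_nat_mul,
    show (r : ℂ) * (2 * (-(p * π / q) : ℝ) * I) = (-(2 * π * r * p / q) : ℝ) * I by
      push_cast; ring,
    Complex.exp_ofReal_mul_I_re, cos_neg]

lemma sum_Ico_inv_pow_mul_angle (hp : 0 < p) (hpq : p < q) :
    ∑ r ∈ Ico 1 q, (Complex.exp (2 * π * I / q) ^ p)⁻¹ ^ r * ((π * r / q - π / 2 : ℝ) * I)
      = (-(π / 2 * (cos (p * π / q) / sin (p * π / q))) : ℝ) := by
  have hq : 0 < q := hp.trans hpq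
  have hζ := Complex.isPrimitiveRoot_exp q hq.ne'
  have hsin : sin (p * π / q) ≠ 0 := by
    exact (sin_pos_of_pos_of_lt_pi (by positivity) (mul_comm (p : ℝ) π ▸ pi_mul_div_lt_pi hpq)).ne'
  have hsin' : Complex.sin (-(p * π / q) : ℝ) ≠ 0 := by
    rwa [← Complex.ofReal_sin, Complex.ofReal_ne_zero, sin_neg, neg_ne_zero]
  have key :=
    sum_Ico_pow_mul_div_sub_half hq (hζ.inv_pow_pow_eq_one p) (hζ.inv_pow_ne_one hp hpq)
  rw [inv_exp_two_pi_mul_I_div_pow, Complex.inv_exp_two_mul_mul_I_sub_one hsin',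
    ← inv_exp_two_pi_mul_I_div_pow] at key
  calc ∑ r ∈ Ico 1 q, (Complex.exp (2 * π * I / q) ^ p)⁻¹ ^ r * ((π * r / q - π / 2 : ℝ) * I)
      = π * I
          * ∑ r ∈ Ico 1 q, (Complex.exp (2 * π * I / q) ^ p)⁻¹ ^ r * ((r : ℂ) / q - 1 / 2) := by
        rw [mul_sum]
        refine sum_congr rfl fun r _ ↦ ?_
        push_cast
        ring
    _ = _ := by
        rw [key, ← Complex.ofReal_cos, ← Complex.ofReal_sin, cos_neg, sin_neg]
        simp only [Complex.ofReal_neg, Complex.ofReal_mul, Complex.ofReal_div,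
          Complex.ofReal_ofNat]
        have : (sin (p * π / q) : ℂ) ≠ 0 := Complex.ofReal_ne_zero.2 hsin
        field_simp
        linear_combination (cos (p * π / q) : ℂ) * Complex.I_sq

end CyclotomicEvaluation

section Reflection

lemma log_two_mul_sin_pi_mul {x : ℝ} (h₀ : 0 < x) (h₁ : x < 1) :
    log (2 * sin (π * x)) = log (2 * π) - log (Gamma x) - log (Gamma (1 - x)) := by
  have hΓ := Gamma_pos_of_pos h₀
  have hΓ' := Gamma_pos_of_pos (sub_pos.2 h₁)
  have hs : 0 < sin (π * x) := sin_pos_of_pos_of_lt_pi (by positivity) (by nlinarith [pi_pos])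
  rw [sub_sub, ← log_mul hΓ.ne' hΓ'.ne', Gamma_mul_Gamma_one_sub, ← log_div (by positivity)
    (by positivity)]
  congr 1
  field_simp

lemma cos_two_pi_mul_sub_div {p q r : ℕ} (hq : 0 < q) (hr : r ≤ q) :
    cos (2 * π * ((q - r : ℕ) : ℝ) * p / q) = cos (2 * π * r * p / q) := by
  rw [Nat.cast_sub hr, show 2 * π * ((q : ℝ) - r) * p / q = p * (2 * π) - 2 * π * r * p / q by
    field_simp, cos_nat_mul_two_pi_sub]

lemma sum_Ico_cos_mul_sub (p q : ℕ) (g : ℕ → ℝ) :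
    ∑ r ∈ Ico 1 q, cos (2 * π * r * p / q) * g (q - r)
      = ∑ r ∈ Ico 1 q, cos (2 * π * r * p / q) * g r := by
  refine sum_nbij' (q - ·) (q - ·) (fun r hr ↦ ?_) (fun r hr ↦ ?_) (fun r hr ↦ ?_)
    (fun r hr ↦ ?_) (fun r hr ↦ ?_)
  all_goals simp only [mem_Ico] at hr ⊢
  · omega
  · omega
  · omega
  · omega
  · rw [cos_two_pi_mul_sub_div (by omega) hr.2.le]

end Reflection

section GaussDigamma

variable {p q : ℕ}

lemma sum_Ico_cos_two_pi_mul_div (hp : 0 < p) (hpq : p < q) :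
    ∑ r ∈ Ico 1 q, cos (2 * π * r * p / q) = -1 := by
  have hζ := Complex.isPrimitiveRoot_exp q (hp.trans hpq).ne'
  have := congrArg Complex.re (sum_Ico_pow_eq_neg_one_of_pow_eq_one (hp.trans hpq)
    (hζ.inv_pow_pow_eq_one p) (hζ.inv_pow_ne_one hp hpq))
  simpa only [Complex.re_sum, re_inv_exp_two_pi_mul_I_div_pow_pow, Complex.neg_re,
    Complex.one_re] using this

lemma re_sum_Ico_inv_pow_mul_log_one_sub (hp : 0 < p) (hpq : p < q) :
    (∑ r ∈ Ico 1 q, (Complex.exp (2 * π * I / q) ^ p)⁻¹ ^ r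
        * Complex.log (1 - Complex.exp (2 * π * I / q) ^ r)).re
      = ∑ r ∈ Ico 1 q, cos (2 * π * r * p / q) * log (2 * sin (π * r / q))
        - π / 2 * (cos (p * π / q) / sin (p * π / q)) := by
  have hlog (r : ℕ) (hr : r ∈ Ico 1 q) : Complex.log (1 - Complex.exp (2 * π * I / q) ^ r)
      = log (2 * sin (π * r / q)) + (π * r / q - π / 2 : ℝ) * I := by
    rw [mem_Ico] at hr
    have hr₀ : (0 : ℝ) < r := by exact_mod_cast hr.1
    have hq₀ : (0 : ℝ) < q := by exact_mod_cast (Nat.zero_le r).trans_lt hr.2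
    rw [exp_two_pi_mul_I_div_pow]
    exact log_one_sub_exp_two_mul_mul_I (by positivity) (pi_mul_div_lt_pi hr.2)
  rw [sum_congr rfl fun r hr ↦ by rw [hlog r hr, mul_add], sum_add_distrib,
    sum_Ico_inv_pow_mul_angle hp hpq, Complex.add_re, Complex.re_sum, Complex.ofReal_re,
    ← sub_eq_add_neg]
  simp only [Complex.re_mul_ofReal, re_inv_exp_two_pi_mul_I_div_pow_pow]

lemma sum_Ico_cos_mul_log_two_mul_sin (hp : 0 < p) (hpq : p < q) :
    ∑ r ∈ Ico 1 q, cos (2 * π * r * p / q) * log (2 * sin (π * r / q))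
      = -log (2 * π) - 2 * ∑ r ∈ Ico 1 q, cos (2 * π * r * p / q) * log (Gamma (r / q)) := by
  have hq : (0 : ℝ) < q := by exact_mod_cast hp.trans hpq
  have hrefl (r : ℕ) (hr : r ∈ Ico 1 q) : log (2 * sin (π * r / q))
      = log (2 * π) - log (Gamma (r / q)) - log (Gamma ((q - r : ℕ) / q)) := by
    rw [mem_Ico] at hr
    have hr₀ : (0 : ℝ) < r := by exact_mod_cast hr.1
    rw [mul_div_assoc, log_two_mul_sin_pi_mul (by positivity)
      ((div_lt_one hq).2 (by exact_mod_cast hr.2)), Nat.cast_sub hr.2.le, sub_div, div_self hq.ne']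
  rw [sum_congr rfl fun r hr ↦ by rw [hrefl r hr]]
  simp only [mul_sub, sum_sub_distrib, ← sum_mul,
    sum_Ico_cos_two_pi_mul_div hp hpq,
    sum_Ico_cos_mul_sub p q fun r ↦ log (Gamma ((r : ℝ) / q))]
  ring

end GaussDigamma

theorem gauss_digamma (p q : ℕ) (hp : 0 < p) (hpq : p < q) :
    digamma ((p : ℝ) / q) =
      -Real.eulerMascheroniConstant - Real.log (2 * π * q)
        - π / 2 * (Real.cos (p * π / q) / Real.sin (p * π / q))
        - 2 * ∑ r ∈ Finset.Ico 1 q,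
            Real.cos (2 * π * r * p / q) * Real.log (Real.Gamma ((r : ℝ) / q)) := by
  have hq : 0 < q := hp.trans hpq
  have h := congrArg Complex.re
    ((Complex.isPrimitiveRoot_exp q hq.ne').digamma_div_eq hp hpq)
  rw [Complex.ofReal_re, Complex.add_re, Complex.ofReal_re,
    re_sum_Ico_inv_pow_mul_log_one_sub hp hpq, sum_Ico_cos_mul_log_two_mul_sin hp hpq] at h
  have hq₀ : (q : ℝ) ≠ 0 := by exact_mod_cast hq.ne'
  rw [h, log_mul (x := 2 * π) (by positivity) hq₀]
  ring
end
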